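/- For the standard 4-letter DNA alphabet with corner points at the four corners (±1, ±1) of the square, the final CGR point of any nonempty sequence determines its last character: the last character equals the unique corner lying in the same open quadrant as pₙ, and pₙ never lies on a coordinate axis. -/
import Mathlib


inductive Nucleotide : Type
  | A | T | G | C
deriving DecidableEq

/-- Corner points at the four corners of the square `(±1, ±1)`. -/
def dnaCorner : Nucleotide → ℚ × ℚ
  | Nucleotide.A => (1, 1)
  | Nucleotide.T => (-1, 1)
  | Nucleotide.G => (-1, -1)
  | Nucleotide.C => (1, -1)

/-- One CGR step: midpoint of the current point and the corner point. -/
def cgrStep (p c : ℚ × ℚ) : ℚ × ℚ := ((p.1 + c.1) / 2, (p.2 + c.2) / 2)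

/-- The final CGR point after processing a sequence from start point `p`. -/
def cgrRun : ℚ × ℚ → List Nucleotide → ℚ × ℚ
  | p, [] => p
  | p, s :: t => cgrRun (cgrStep p (dnaCorner s)) t

lemma cgr_key : ∀ (S : List Nucleotide) (p : ℚ × ℚ) (h : S ≠ []),
    -1 < p.1 → p.1 < 1 → -1 < p.2 → p.2 < 1 →
    (-1 < (cgrRun p S).1 ∧ (cgrRun p S).1 < 1 ∧ -1 < (cgrRun p S).2 ∧ (cgrRun p S).2 < 1) ∧
    (cgrRun p S).1 ≠ 0 ∧ (cgrRun p S).2 ≠ 0 ∧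
    (0 < (cgrRun p S).1 ↔ 0 < (dnaCorner (S.getLast h)).1) ∧
    (0 < (cgrRun p S).2 ↔ 0 < (dnaCorner (S.getLast h)).2) := by
  intro S
  induction S with
  | nil => intro p h; exact absurd rfl h
  | cons s t ih =>
    intro p h h1 h2 h3 h4
    cases t with
    | nil =>
      cases s <;>
        simp only [cgrRun, List.getLast, cgrStep, dnaCorner] <;>
        refine ⟨⟨?_, ?_, ?_, ?_⟩, ?_, ?_, ?_, ?_⟩ <;>
        first
          | linarith
          | (intro hc; linarith)
          | (constructor <;> intro hc <;> first | linarith | norm_num at hc ⊢ <;> linarith)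
    | cons s' t' =>
      have ht : s' :: t' ≠ [] := by simp
      have hL : (s :: s' :: t').getLast h = (s' :: t').getLast ht := by
        simp [List.getLast]
      rw [hL]
      show _ ∧ _
      have := ih (cgrStep p (dnaCorner s)) ht
      refine this ?_ ?_ ?_ ?_ <;> cases s <;> simp [cgrStep, dnaCorner] <;> linarith

/-- the final CGR point of a nonempty DNA sequence never lies on a coordinate
axis, and lies in the same open quadrant as the corner of the last character. -/
theorem cgr_last_char_quadrant (S : List Nucleotide) (h : S ≠ []) :
    (cgrRun (0, 0) S).1 ≠ 0 ∧ (cgrRun (0, 0) S).2 ≠ 0 ∧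
    (0 < (cgrRun (0, 0) S).1 ↔ 0 < (dnaCorner (S.getLast h)).1) ∧
    (0 < (cgrRun (0, 0) S).2 ↔ 0 < (dnaCorner (S.getLast h)).2) := by
  have := cgr_key S (0, 0) h (by norm_num) (by norm_num) (by norm_num) (by norm_num)
  exact this.2
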